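/- arXiv:1809.03869 — 2 statements merged into one kernel-verified Lean document; each statement's English description precedes it below -/
import Mathlib

section
/- (Grime) There exist four six-sided dice A, B, C, D such that, rolled singly, A beats B, B beats C, C beats D, and D beats A, but when each player rolls two copies of their die and sums them, the direction of beating reverses: the doubled B beats the doubled A, the doubled C beats the doubled B, the doubled D beats the doubled C, and the doubled A beats the doubled D. -/
/-- A single six-sided die `d` beats a die `e` if `d` rolls strictly higher than `e`
in more than 18 of the 36 equally likely face pairs. -/
def Beats (d e : Fin 6 → ℕ) : Prop :=
  18 < (Finset.univ.filter (fun p : Fin 6 × Fin 6 => d p.1 > e p.2)).card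

/-- The doubled die `d` beats the doubled die `e` if the sum of two independent rolls
of `d` strictly exceeds the sum of two independent rolls of `e` in more than 648 of
the 1296 equally likely outcomes. -/
def DoubledBeats (d e : Fin 6 → ℕ) : Prop :=
  648 < (Finset.univ.filter
    (fun q : (Fin 6 × Fin 6) × (Fin 6 × Fin 6) =>
      d q.1.1 + d q.1.2 > e q.2.1 + e q.2.2)).card

set_option maxRecDepth 10000 in
theorem grime_reversing_dice :
    ∃ A B C D : Fin 6 → ℕ,
      Beats A B ∧ Beats B C ∧ Beats C D ∧ Beats D A ∧
      DoubledBeats B A ∧ DoubledBeats C B ∧ DoubledBeats D C ∧ DoubledBeats A D := by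
  refine ⟨![0,0,5,5,5,5], ![3,3,3,3,4,4], ![2,2,2,2,6,6], ![1,1,1,1,8,8], ?_, ?_, ?_, ?_, ?_, ?_, ?_, ?_⟩ <;>
    first
      | (show 18 < _; decide)
      | (show 648 < _; decide)
end

section
/- (Oskar van Deventer) There exists a finite family of six-sided dice d : Fin n → (Fin 6 → ℕ), for some n ≥ 3, such that for any two distinct indices i and j there exists an index k with d k beating d i and d k beating d j; that is, whichever two dice two opponents pick, a third player can always pick a die that beats both. -/
theorem oskar_dice :
    ∃ (n : ℕ), 3 ≤ n ∧ ∃ d : Fin n → (Fin 6 → ℕ),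
      ∀ i j : Fin n, i ≠ j →
        ∃ k : Fin n, Beats (d k) (d i) ∧ Beats (d k) (d j) := by
  refine ⟨7, by norm_num, ![![2,2,14,14,17,17], ![7,7,10,10,16,16], ![5,5,13,13,15,15],
    ![3,3,9,9,21,21], ![1,1,12,12,20,20], ![6,6,8,8,19,19], ![4,4,11,11,18,18]], ?_⟩
  unfold Beats
  decide
end
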